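/- Let Ξ be an x-tower site with two rows (ν = 1): m_0 > m_1 ≥ 0, y_0 ≠ y_1, points (x_{i,0}, y_0) for 0 ≤ i ≤ m_0 and (x_{i,1}, y_1) for 0 ≤ i ≤ m_1, with {x_{0,1},...,x_{m_1,1}} ⊆ {x_{0,0},...,x_{m_0,0}}. Then I(Ξ) = ⟨ ∏_{i=0}^{m_0}(x - x_{i,0}), (∏_{i=0}^{m_1}(x - x_{i,1}))(y - y_0), (y - y_0)(y - y_1) ⟩. -/
import Mathlib


open MvPolynomial

noncomputable def vanishingIdeal {F : Type*} [Field F] (Ξ : Set (F × F)) :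
    Ideal (MvPolynomial (Fin 2) F) :=
  ⨅ ξ ∈ Ξ, RingHom.ker (eval (fun i : Fin 2 => if i = 0 then ξ.1 else ξ.2) :
    MvPolynomial (Fin 2) F →+* F)

lemma eval_aevalX0 {F : Type*} [CommRing F] (f : Fin 2 → F) (B : Polynomial F) :
    eval f (Polynomial.aeval (X 0 : MvPolynomial (Fin 2) F) B) = Polynomial.eval (f 0) B := by
  induction B using Polynomial.induction_on' with
  | add p q hp hq => simp [hp, hq]
  | monomial n a => simp [Polynomial.aeval_monomial, mul_comm]

lemma prod_X_sub_C_dvd_of_roots {F : Type*} [Field F] (s : Finset F) (B : Polynomial F)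
    (h : ∀ a ∈ s, B.eval a = 0) :
    (∏ a ∈ s, (Polynomial.X - Polynomial.C a)) ∣ B := by
  classical
  revert h
  induction s using Finset.induction generalizing B with
  | empty => simp
  | @insert a s ha ih =>
    intro h
    obtain ⟨B₁, hB₁⟩ := Polynomial.dvd_iff_isRoot.mpr (h a (Finset.mem_insert_self a s))
    rw [Finset.prod_insert ha, hB₁]
    refine mul_dvd_mul_left _ (ih B₁ fun b hb => ?_)
    have hb' := h b (Finset.mem_insert_of_mem hb)
    rw [hB₁] at hb'
    simp at hb'
    rcases hb' with h1 | h1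
    · exact absurd (sub_eq_zero.mp h1 ▸ hb) ha
    · exact h1

lemma decomp {F : Type*} [CommRing F] (y₀ y₁ : F) (p : MvPolynomial (Fin 2) F) :
    ∃ (q : MvPolynomial (Fin 2) F) (A B : Polynomial F),
      p = q * ((X 1 - C y₀) * (X 1 - C y₁)) +
          Polynomial.aeval (X 0) A * (X 1 - C y₀) + Polynomial.aeval (X 0) B := by
  induction p using MvPolynomial.induction_on with
  | C a => exact ⟨0, 0, Polynomial.C a, by simp⟩
  | add p r hp hr =>
    obtain ⟨q, A, B, h1⟩ := hp
    obtain ⟨q', A', B', h2⟩ := hr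
    exact ⟨q + q', A + A', B + B', by rw [h1, h2]; simp only [map_add]; ring⟩
  | mul_X p i hp =>
    obtain ⟨q, A, B, h1⟩ := hp
    fin_cases i
    · exact ⟨q * X 0, Polynomial.X * A, Polynomial.X * B, by
        rw [h1]; simp only [map_mul, Polynomial.aeval_X, Fin.mk_zero, Fin.mk_one, Fin.isValue]; ring⟩
    · refine ⟨q * X 1 + Polynomial.aeval (X 0) A, Polynomial.C y₁ * A + B,
        Polynomial.C y₀ * B, ?_⟩
      rw [h1]
      simp only [map_mul, map_add, Polynomial.aeval_C, MvPolynomial.algebraMap_eq,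
        Fin.mk_zero, Fin.mk_one, Fin.isValue]
      ring

/-- for a two-row x-tower site (`m₀ > m₁`, `y₀ ≠ y₁`, second-row abscissae
among the first-row abscissae), `I(Ξ)` is generated by `∏(x-x_{i,0})`,
`(∏(x-x_{i,1}))(y-y₀)` and `(y-y₀)(y-y₁)`. -/
theorem two_row_tower_vanishing_ideal {F : Type*} [Field F] (m₀ m₁ : ℕ)
    (x0 x1 : ℕ → F) (y₀ y₁ : F)
    (hm : m₁ < m₀) (hy : y₀ ≠ y₁)
    (hx0 : ∀ s t, s ≤ m₀ → t ≤ m₀ → x0 s = x0 t → s = t)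
    (hx1 : ∀ s t, s ≤ m₁ → t ≤ m₁ → x1 s = x1 t → s = t)
    (hsub : ∀ i ≤ m₁, ∃ s ≤ m₀, x1 i = x0 s) :
    vanishingIdeal
        ({p : F × F | ∃ i ≤ m₀, p = (x0 i, y₀)} ∪ {p : F × F | ∃ i ≤ m₁, p = (x1 i, y₁)}) =
      Ideal.span
        {∏ i ∈ Finset.range (m₀ + 1), (X 0 - C (x0 i)),
         (∏ i ∈ Finset.range (m₁ + 1), (X 0 - C (x1 i))) * (X 1 - C y₀),
         (X 1 - C y₀) * (X 1 - C y₁)} := by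
  classical
  set S : Set (F × F) :=
    {p : F × F | ∃ i ≤ m₀, p = (x0 i, y₀)} ∪ {p : F × F | ∃ i ≤ m₁, p = (x1 i, y₁)} with hS
  have hmem : ∀ p : MvPolynomial (Fin 2) F, p ∈ _root_.vanishingIdeal S ↔
      ∀ ξ ∈ S, eval (fun i : Fin 2 => if i = 0 then ξ.1 else ξ.2) p = 0 := by
    intro p
    simp only [_root_.vanishingIdeal, Ideal.mem_iInf, RingHom.mem_ker]
  refine le_antisymm ?_ ?_
  · -- vanishing ideal ⊆ span
    intro p hp
    obtain ⟨q, A, B, hdec⟩ := decomp y₀ y₁ p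
    have hBroot : ∀ s ≤ m₀, B.eval (x0 s) = 0 := by
      intro s hs
      have h0 := (hmem p).mp hp (x0 s, y₀) (Or.inl ⟨s, hs, rfl⟩)
      rw [hdec] at h0
      simpa [eval_aevalX0] using h0
    have hAroot : ∀ s ≤ m₁, A.eval (x1 s) = 0 := by
      intro s hs
      have h0 := (hmem p).mp hp (x1 s, y₁) (Or.inr ⟨s, hs, rfl⟩)
      rw [hdec] at h0
      obtain ⟨t, ht, hxe⟩ := hsub s hs
      have hBz : B.eval (x1 s) = 0 := by rw [hxe]; exact hBroot t ht
      simp [eval_aevalX0, hBz, sub_eq_zero] at h0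
      rcases h0 with h0 | h0
      · exact h0
      · exact absurd h0.symm hy
    have hB : (∏ i ∈ Finset.range (m₀ + 1), (Polynomial.X - Polynomial.C (x0 i))) ∣ B := by
      have hd := prod_X_sub_C_dvd_of_roots ((Finset.range (m₀ + 1)).image x0) B (by
        intro a ha
        simp only [Finset.mem_image, Finset.mem_range] at ha
        obtain ⟨i, hi, rfl⟩ := ha
        exact hBroot i (by omega))
      rwa [Finset.prod_image (fun a ha b hb hab =>
        hx0 a b (by simpa using Nat.lt_succ_iff.mp (Finset.mem_range.mp ha))
          (Nat.lt_succ_iff.mp (Finset.mem_range.mp hb)) hab)] at hd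
    have hA : (∏ i ∈ Finset.range (m₁ + 1), (Polynomial.X - Polynomial.C (x1 i))) ∣ A := by
      have hd := prod_X_sub_C_dvd_of_roots ((Finset.range (m₁ + 1)).image x1) A (by
        intro a ha
        simp only [Finset.mem_image, Finset.mem_range] at ha
        obtain ⟨i, hi, rfl⟩ := ha
        exact hAroot i (by omega))
      rwa [Finset.prod_image (fun a ha b hb hab =>
        hx1 a b (Nat.lt_succ_iff.mp (Finset.mem_range.mp ha))
          (Nat.lt_succ_iff.mp (Finset.mem_range.mp hb)) hab)] at hd
    obtain ⟨B', hB'⟩ := hB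
    obtain ⟨A', hA'⟩ := hA
    have key : p = q * ((X 1 - C y₀) * (X 1 - C y₁)) +
        Polynomial.aeval (X 0) A' * ((∏ i ∈ Finset.range (m₁ + 1), (X 0 - C (x1 i))) * (X 1 - C y₀)) +
        Polynomial.aeval (X 0) B' * (∏ i ∈ Finset.range (m₀ + 1), (X 0 - C (x0 i))) := by
      rw [hdec, hA', hB']
      simp only [map_mul, map_prod, map_sub, Polynomial.aeval_X, Polynomial.aeval_C,
        MvPolynomial.algebraMap_eq]
      ring
    rw [key]
    refine Ideal.add_mem _ (Ideal.add_mem _ ?_ ?_) ?_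
    · exact Ideal.mul_mem_left _ _ (Ideal.subset_span (by simp))
    · exact Ideal.mul_mem_left _ _ (Ideal.subset_span (by simp))
    · exact Ideal.mul_mem_left _ _ (Ideal.subset_span (by simp))
  · -- span ⊆ vanishing ideal
    rw [Ideal.span_le]
    intro g hg
    rw [SetLike.mem_coe, hmem]
    simp only [Set.mem_insert_iff, Set.mem_singleton_iff] at hg
    rintro ξ (⟨i, hi, rfl⟩ | ⟨i, hi, rfl⟩) <;>
      rcases hg with rfl | rfl | rfl
    · rw [map_prod]
      exact Finset.prod_eq_zero (Finset.mem_range.mpr (by omega : i < m₀ + 1)) (by simp)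
    · simp
    · simp
    · obtain ⟨s, hs, hxe⟩ := hsub i hi
      rw [map_prod]
      exact Finset.prod_eq_zero (Finset.mem_range.mpr (by omega : s < m₀ + 1)) (by simp [hxe])
    · rw [map_mul, map_prod]
      have : eval (fun j : Fin 2 => if j = 0 then ((x1 i, y₁) : F × F).1 else ((x1 i, y₁) : F × F).2)
          (X 0 - C (x1 i) : MvPolynomial (Fin 2) F) = 0 := by simp
      rw [Finset.prod_eq_zero (Finset.mem_range.mpr (by omega : i < m₁ + 1)) this, zero_mul]
    · simp
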